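/- For each 3CNF boolean formula Φ, the NMU default theory Δ(Φ)=(D(Φ),∅) described in the context has tightness 1, and Φ is unsatisfiable if and only if Δ(Φ) ⊨ l. -/
import Mathlib


/-! Propositional formulas -/

inductive Form (V : Type) : Type
  | atom : V → Form V
  | tru  : Form V
  | fals : Form V
  | neg  : Form V → Form V
  | conj : Form V → Form V → Form V
  | disj : Form V → Form V → Form V

/-- Satisfaction of a formula by a valuation. -/
def Form.sat {V : Type} (v : V → Prop) : Form V → Prop
  | .atom a => v a
  | .tru => True
  | .fals => False
  | .neg φ => ¬ Form.sat v φ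
  | .conj φ ψ => Form.sat v φ ∧ Form.sat v ψ
  | .disj φ ψ => Form.sat v φ ∨ Form.sat v ψ

/-- Logical logClosure `T*` of a set of formulas. -/
def logClosure {V : Type} (T : Set (Form V)) : Set (Form V) :=
  { φ | ∀ v : V → Prop, (∀ ψ ∈ T, Form.sat v ψ) → Form.sat v φ }

/-- A default rule `α : β₁,…,β_m / γ` (`pre = none` means the prerequisite is missing). -/
structure Default (V : Type) : Type where
  pre   : Option (Form V)
  justs : List (Form V)
  concl : Form V

/-- The stage sets `E_i` relative to a candidate extension `E`:
`E_0 = W`, `E_{i+1} = E_i* ∪ {γ | α:β₁,…,β_m/γ ∈ D, α ∈ E_i, ¬β₁ ∉ E, …, ¬β_m ∉ E}`. -/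
def extStage {V : Type} (D : Set (Default V)) (W : Set (Form V)) (E : Set (Form V)) :
    ℕ → Set (Form V)
  | 0 => W
  | i + 1 =>
      logClosure (extStage D W E i) ∪
        { φ | ∃ d ∈ D, d.concl = φ ∧ (∀ a ∈ d.pre, a ∈ extStage D W E i) ∧
              ∀ b ∈ d.justs, Form.neg b ∉ E }

/-- `E` is an extension of the default theory `(D, W)`. -/
def IsExtension {V : Type} (D : Set (Default V)) (W : Set (Form V)) (E : Set (Form V)) : Prop :=
  E = ⋃ i, extStage D W E i

/-- `(D, W) ⊨ φ`: every extension of `(D, W)` contains `φ`. -/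
def entails {V : Type} (D : Set (Default V)) (W : Set (Form V)) (φ : Form V) : Prop :=
  ∀ E, IsExtension D W E → φ ∈ E

/-! Literals -/

/-- A literal: a letter together with a sign (`pos = true` means a positive literal). -/
structure Lit (V : Type) : Type where
  letter : V
  pos : Bool

/-- The formula corresponding to a literal. -/
def Lit.toForm {V : Type} (l : Lit V) : Form V :=
  if l.pos then Form.atom l.letter else Form.neg (Form.atom l.letter)

/-- Negation of a literal (so that `¬¬a = a`). -/
def Lit.negate {V : Type} (l : Lit V) : Lit V := ⟨l.letter, !l.pos⟩

/-- A set of literals is consistent if it contains no complementary pair. -/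
def LitConsistent {V : Type} (S : Set (Lit V)) : Prop := ∀ l ∈ S, l.negate ∉ S

/-! Normal mixed unary (NMU) default theories -/

/-- An NMU default `α : β / β` with `α` empty or a single literal and `β` a single literal. -/
structure NMUDefault (V : Type) : Type where
  pre : Option (Lit V)
  concl : Lit V

/-- The general default rule corresponding to an NMU default. -/
def NMUDefault.toDefault {V : Type} (d : NMUDefault V) : Default V :=
  ⟨d.pre.map Lit.toForm, [d.concl.toForm], d.concl.toForm⟩

/-- `E` is an extension of the NMU theory `(D, W)`. -/
def NMU.IsExtension {V : Type} (D : Set (NMUDefault V)) (W : Set (Lit V))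
    (E : Set (Form V)) : Prop :=
  _root_.IsExtension (NMUDefault.toDefault '' D) (Lit.toForm '' W) E

/-- The NMU theory `(D, W)` entails the literal `l`. -/
def NMU.entails {V : Type} (D : Set (NMUDefault V)) (W : Set (Lit V)) (l : Lit V) : Prop :=
  _root_.entails (NMUDefault.toDefault '' D) (Lit.toForm '' W) l.toForm

/-- An NMU theory is normal unary (NU) if every nonempty prerequisite is positive. -/
def IsNU {V : Type} (D : Set (NMUDefault V)) : Prop :=
  ∀ d ∈ D, ∀ p ∈ d.pre, p.pos = true

/-! Atomic dependency graph -/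

/-- Edge `(x, y)` of the atomic dependency graph: `x` occurs in the prerequisite and `y`
in the consequent of some default of `D`. -/
def depEdge {V : Type} (D : Set (NMUDefault V)) (x y : V) : Prop :=
  ∃ d ∈ D, (∃ p ∈ d.pre, p.letter = x) ∧ d.concl.letter = y

/-- There is a path from `x` to `y` in the atomic dependency graph. -/
def depReach {V : Type} (D : Set (NMUDefault V)) : V → V → Prop :=
  Relation.ReflTransGen (depEdge D)

/-- A set of literals `S` influences a literal `l`. -/
def influences {V : Type} (D : Set (NMUDefault V)) (S : Set (Lit V)) (l : Lit V) : Prop :=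
  ∃ t ∈ S, depReach D t.letter l.letter

/-- A 3CNF formula over variables `Fin n` with `m` conjuncts is represented by the
function giving the `k`-th literal of the `j`-th clause. -/
def Sat3 {n m : ℕ} (Φ : Fin m → Fin 3 → Lit (Fin n)) : Prop :=
  ∃ τ : Fin n → Bool, ∀ j : Fin m, ∃ k : Fin 3, τ (Φ j k).letter = (Φ j k).pos

/-- The letters of the theory `Δ(Φ)`: the variables `xᵢ` and the fresh letters
`c_k` (`k = 1, …, m`) and `l`. -/
inductive PhiVar (n m : ℕ) : Type
  | X : Fin n → PhiVar n m
  | C : Fin m → PhiVar n m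
  | L : PhiVar n m

/-- `D(Φ) = D₁ ∪ D₂ ∪ D₃`, where `D₁ = {:xᵢ/xᵢ, :¬xᵢ/¬xᵢ}`,
`D₂ = {t_{k,j}:c_k/c_k}` and `D₃ = {:¬c_k/¬c_k, ¬c_k:l/l}`. -/
def DPhi {n m : ℕ} (Φ : Fin m → Fin 3 → Lit (Fin n)) : Set (NMUDefault (PhiVar n m)) :=
  { d | (∃ i, d = ⟨none, ⟨PhiVar.X i, true⟩⟩) ∨
        (∃ i, d = ⟨none, ⟨PhiVar.X i, false⟩⟩) ∨
        (∃ k j, d = ⟨some ⟨PhiVar.X (Φ k j).letter, (Φ k j).pos⟩, ⟨PhiVar.C k, true⟩⟩) ∨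
        (∃ k, d = ⟨none, ⟨PhiVar.C k, false⟩⟩) ∨
        (∃ k, d = ⟨some ⟨PhiVar.C k, false⟩, ⟨PhiVar.L, true⟩⟩) }

namespace NMUProof

variable {V : Type}

lemma subset_logClosure (T : Set (Form V)) : T ⊆ logClosure T :=
  fun _ hφ _ hv => hv _ hφ

lemma logClosure_mono {S T : Set (Form V)} (h : S ⊆ T) : logClosure S ⊆ logClosure T :=
  fun _ hφ v hv => hφ v fun ψ hψ => hv ψ (h hψ)

lemma logClosure_idem {T : Set (Form V)} : logClosure (logClosure T) ⊆ logClosure T :=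
  fun _ hφ v hv => hφ v fun ψ hψ => hψ v hv

lemma extStage_succ_subset (D : Set (Default V)) (W E : Set (Form V)) (i : ℕ) :
    extStage D W E i ⊆ extStage D W E (i + 1) :=
  fun φ h => Or.inl (subset_logClosure _ h)

lemma extStage_monotone (D : Set (Default V)) (W E : Set (Form V)) :
    Monotone (extStage D W E) :=
  monotone_nat_of_le_succ (extStage_succ_subset D W E)

lemma extStage_subset_ext {D : Set (Default V)} {W E : Set (Form V)}
    (hE : IsExtension D W E) (i : ℕ) : extStage D W E i ⊆ E :=
  fun φ h => hE.ge (Set.mem_iUnion.mpr ⟨i, h⟩)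

lemma fired_mem {D : Set (Default V)} {W E : Set (Form V)} (hE : IsExtension D W E)
    {d : Default V} (hd : d ∈ D)
    (hpre : ∀ a ∈ d.pre, a ∈ E) (hj : ∀ b ∈ d.justs, Form.neg b ∉ E) : d.concl ∈ E := by
  obtain ⟨i, hi⟩ : ∃ i, ∀ a ∈ d.pre, a ∈ extStage D W E i := by
    cases hp : d.pre with
    | none => exact ⟨0, by simp [hp]⟩
    | some α =>
      have : α ∈ E := hpre α (by simp [hp])
      rw [hE] at this
      obtain ⟨i, hi⟩ := Set.mem_iUnion.mp this
      exact ⟨i, by simp [hp]; exact hi⟩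
  have : d.concl ∈ extStage D W E (i + 1) := Or.inr ⟨d, hd, rfl, hi, hj⟩
  exact extStage_subset_ext hE (i + 1) this

lemma ext_not_both {D : Set (Default V)} {W E : Set (Form V)} (hE : IsExtension D W E)
    {φ₀ : Form V} (h0 : φ₀ ∉ E) {ψ : Form V} (h1 : ψ ∈ E) (h2 : Form.neg ψ ∈ E) : False := by
  obtain ⟨i, hi⟩ := Set.mem_iUnion.mp (hE.le h1)
  obtain ⟨j, hj⟩ := Set.mem_iUnion.mp (hE.le h2)
  have hi' : ψ ∈ extStage D W E (max i j) := extStage_monotone D W E (le_max_left i j) hi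
  have hj' : Form.neg ψ ∈ extStage D W E (max i j) := extStage_monotone D W E (le_max_right i j) hj
  apply h0
  have : φ₀ ∈ extStage D W E (max i j + 1) := by
    refine Or.inl ?_
    intro v hv
    exact absurd (hv ψ hi') (hv (Form.neg ψ) hj')
  exact extStage_subset_ext hE _ this

def firedConcl (D : Set (Default V)) (E : Set (Form V)) : Set (Form V) :=
  { φ | ∃ d ∈ D, d.concl = φ ∧ (∀ a ∈ d.pre, a ∈ E) ∧ ∀ b ∈ d.justs, Form.neg b ∉ E }

lemma ext_subset_closure {D : Set (Default V)} {W E : Set (Form V)} (hE : IsExtension D W E) :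
    E ⊆ logClosure (W ∪ firedConcl D E) := by
  have key : ∀ i, extStage D W E i ⊆ logClosure (W ∪ firedConcl D E) := by
    intro i; induction i with
    | zero => exact fun φ h => subset_logClosure _ (Or.inl h)
    | succ i ih =>
      intro φ hφ
      rcases hφ with h | ⟨d, hd, rfl, hpre, hj⟩
      · exact logClosure_idem (logClosure_mono ih h)
      · exact subset_logClosure _
          (Or.inr ⟨d, hd, rfl, fun a ha => extStage_subset_ext hE i (hpre a ha), hj⟩)
  intro φ hφ
  obtain ⟨i, hi⟩ := Set.mem_iUnion.mp (hE.le hφ)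
  exact key i hi

end NMUProof
namespace NMUProof

def rank {n m : ℕ} : PhiVar n m → ℕ
  | .X _ => 0
  | .C _ => 1
  | .L => 2

lemma depEdge_rank {n m : ℕ} {Φ : Fin m → Fin 3 → Lit (Fin n)} {x y : PhiVar n m}
    (h : depEdge (DPhi Φ) x y) : rank x < rank y := by
  obtain ⟨d, hd, ⟨p, hp, hpx⟩, hcy⟩ := h
  rcases hd with ⟨i, rfl⟩ | ⟨i, rfl⟩ | ⟨k, j, rfl⟩ | ⟨k, rfl⟩ | ⟨k, rfl⟩ <;>
    simp_all [rank] <;> subst_vars <;> simp [rank]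

lemma depReach_rank {n m : ℕ} {Φ : Fin m → Fin 3 → Lit (Fin n)} {x y : PhiVar n m}
    (h : depReach (DPhi Φ) x y) : rank x ≤ rank y := by
  induction h with
  | refl => exact le_rfl
  | tail _ e ih => exact ih.trans (depEdge_rank e).le

lemma tightness_one {n m : ℕ} (Φ : Fin m → Fin 3 → Lit (Fin n)) :
    ∀ a b : PhiVar n m, depReach (DPhi Φ) a b → depReach (DPhi Φ) b a → a = b := by
  intro a b hab hba
  rcases (Relation.ReflTransGen.cases_head hab) with rfl | ⟨c, e, hcb⟩
  · rfl
  · exact absurd ((depEdge_rank e).trans_le ((depReach_rank hcb).trans (depReach_rank hba)))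
      (lt_irrefl _)

end NMUProof
namespace NMUProof

variable {n m : ℕ}

lemma lemA (Φ : Fin m → Fin 3 → Lit (Fin n)) {E : Set (Form (PhiVar n m))}
    (hE : NMU.IsExtension (DPhi Φ) ∅ E) (hl : Form.atom PhiVar.L ∉ E) : Sat3 Φ := by
  classical
  have hE' : IsExtension (NMUDefault.toDefault '' DPhi Φ) (∅ : Set (Form (PhiVar n m))) E := by
    simpa [NMU.IsExtension, Set.image_empty] using hE
  have fire : ∀ d ∈ DPhi Φ, (∀ p ∈ d.pre, Lit.toForm p ∈ E) →
      Form.neg d.concl.toForm ∉ E → d.concl.toForm ∈ E := by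
    intro d hd hpre hj
    refine fired_mem hE' (Set.mem_image_of_mem _ hd) ?_ ?_
    · intro a ha
      simp only [NMUDefault.toDefault, Option.mem_map] at ha
      obtain ⟨p, hp, rfl⟩ := ha
      exact hpre p hp
    · intro b hb
      simp only [NMUDefault.toDefault, List.mem_singleton] at hb
      subst hb; exact hj
  have notboth : ∀ {ψ : Form (PhiVar n m)}, ψ ∈ E → Form.neg ψ ∈ E → False :=
    fun h1 h2 => ext_not_both hE' hl h1 h2
  have hET : E ⊆ logClosure ((∅ : Set (Form (PhiVar n m))) ∪
      firedConcl (NMUDefault.toDefault '' DPhi Φ) E) := ext_subset_closure hE'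
  have hTE : firedConcl (NMUDefault.toDefault '' DPhi Φ) E ⊆ E := by
    rintro φ ⟨d, hd, rfl, hpre, hj⟩
    exact fired_mem hE' hd hpre hj
  -- the canonical valuation
  have hv : ∀ φ ∈ (∅ : Set (Form (PhiVar n m))) ∪
      firedConcl (NMUDefault.toDefault '' DPhi Φ) E,
      Form.sat (fun a => a = PhiVar.L ∨ Form.atom a ∈ E) φ := by
    rintro φ hmem
    rcases hmem with h0 | hφ
    · exact h0.elim
    have hφE : φ ∈ E := hTE hφ
    obtain ⟨d', ⟨d, hd, rfl⟩, hc, hpre, hj⟩ := hφ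
    rcases hd with ⟨i, rfl⟩ | ⟨i, rfl⟩ | ⟨k, j, rfl⟩ | ⟨k, rfl⟩ | ⟨k, rfl⟩ <;>
        simp only [NMUDefault.toDefault, Lit.toForm, if_true, if_false, Bool.false_eq_true,
          ite_false, ite_true] at hc <;> subst hc
    · exact Or.inr hφE
    · rintro (h | h)
      · cases h
      · exact notboth h hφE
    · exact Or.inr hφE
    · rintro (h | h)
      · cases h
      · exact notboth h hφE
    · exact Or.inl rfl
  have hnL : Form.neg (Form.atom PhiVar.L) ∉ E := fun h => (hET h) _ hv (Or.inl rfl)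
  have hnC : ∀ k, Form.neg (Form.atom (PhiVar.C k)) ∉ E := by
    intro k h
    apply hl
    have := fire ⟨some ⟨PhiVar.C k, false⟩, ⟨PhiVar.L, true⟩⟩
      (Or.inr (Or.inr (Or.inr (Or.inr ⟨k, rfl⟩)))) ?_ ?_
    · simpa [Lit.toForm] using this
    · rintro p hp
      rw [Option.mem_def, Option.some_inj] at hp
      subst hp
      simpa [Lit.toForm] using h
    · simpa [Lit.toForm] using hnL
  have hnnC : ∀ k, Form.neg (Form.neg (Form.atom (PhiVar.C k))) ∈ E := by
    intro k
    by_contra h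
    refine hnC k ?_
    have := fire ⟨none, ⟨PhiVar.C k, false⟩⟩ (Or.inr (Or.inr (Or.inr (Or.inl ⟨k, rfl⟩))))
      (by rintro p hp; simp at hp) (by simpa [Lit.toForm] using h)
    simpa [Lit.toForm] using this
  have hd2 : ∀ k, ∃ j, Lit.toForm ⟨PhiVar.X (Φ k j).letter, (Φ k j).pos⟩ ∈ E := by
    intro k
    by_contra H
    push_neg at H
    have hv' : ∀ φ ∈ (∅ : Set (Form (PhiVar n m))) ∪
        firedConcl (NMUDefault.toDefault '' DPhi Φ) E,
        Form.sat (fun a => a = PhiVar.L ∨ (Form.atom a ∈ E ∧ a ≠ PhiVar.C k)) φ := by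
      rintro φ hmem
      rcases hmem with h0 | hφ
      · exact h0.elim
      have hφE : φ ∈ E := hTE hφ
      obtain ⟨d', ⟨d, hd, rfl⟩, hc, hpre, hj⟩ := hφ
      rcases hd with ⟨i, rfl⟩ | ⟨i, rfl⟩ | ⟨k', j, rfl⟩ | ⟨k', rfl⟩ | ⟨k', rfl⟩ <;>
          simp only [NMUDefault.toDefault, Lit.toForm, if_true, if_false, Bool.false_eq_true,
            ite_false, ite_true] at hc <;> subst hc
      · exact Or.inr ⟨hφE, by simp⟩
      · rintro (h | ⟨h, -⟩)
        · cases h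
        · exact notboth h hφE
      · by_cases hk : k' = k
        · subst hk
          have := hpre (Lit.toForm ⟨PhiVar.X (Φ k' j).letter, (Φ k' j).pos⟩)
            (by simp [NMUDefault.toDefault])
          exact absurd this (H j)
        · exact Or.inr ⟨hφE, by simp [hk]⟩
      · exact absurd hφE (hnC k')
      · exact Or.inl rfl
    have := (hET (hnnC k)) _ hv'
    exact this fun hvk => hvk.elim (fun h => by cases h) (fun h => h.2 rfl)
  refine ⟨fun i => decide (Form.atom (PhiVar.X i) ∈ E), ?_⟩
  intro j
  obtain ⟨jj, hjj⟩ := hd2 j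
  refine ⟨jj, ?_⟩
  cases hpos : (Φ j jj).pos with
  | false =>
    rw [hpos] at hjj
    simp only [Lit.toForm, Bool.false_eq_true, if_false] at hjj
    exact decide_eq_false fun h => notboth h hjj
  | true =>
    rw [hpos] at hjj
    simp only [Lit.toForm, if_true] at hjj
    exact decide_eq_true hjj

end NMUProof
namespace NMUProof

variable {n m : ℕ}

lemma lemB (Φ : Fin m → Fin 3 → Lit (Fin n)) (hs : Sat3 Φ) :
    ∃ E, NMU.IsExtension (DPhi Φ) ∅ E ∧ Form.atom PhiVar.L ∉ E := by
  classical
  obtain ⟨τ, hτ⟩ := hs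
  set T0 : Set (Form (PhiVar n m)) :=
    { φ | (∃ i, φ = Lit.toForm ⟨PhiVar.X i, τ i⟩) ∨ (∃ k, φ = Form.atom (PhiVar.C k)) } with hT0
  set E : Set (Form (PhiVar n m)) := logClosure T0 with hEdef
  -- the witnessing valuation
  set w : PhiVar n m → Prop :=
    fun a => (∃ k, a = PhiVar.C k) ∨ (∃ i, a = PhiVar.X i ∧ τ i = true) with hwdef
  have hw : ∀ φ ∈ T0, Form.sat w φ := by
    rintro φ (⟨i, rfl⟩ | ⟨k, rfl⟩)
    · cases hti : τ i with
      | true =>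
        simp only [Lit.toForm, hti, if_true]
        exact Or.inr ⟨i, rfl, hti⟩
      | false =>
        simp only [Lit.toForm, hti, Bool.false_eq_true, if_false]
        rintro (⟨k, h⟩ | ⟨i', h, ht⟩)
        · cases h
        · cases h; rw [hti] at ht; cases ht
    · exact Or.inl ⟨k, rfl⟩
  have hLne : Form.atom PhiVar.L ∉ E := by
    intro h
    rcases h w hw with ⟨k, h⟩ | ⟨i, h, -⟩ <;> cases h
  have hnCE : ∀ k, Form.neg (Form.atom (PhiVar.C k)) ∉ E :=
    fun k h => (h w hw) (Or.inl ⟨k, rfl⟩)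
  have hnnCE : ∀ k, Form.neg (Form.neg (Form.atom (PhiVar.C k))) ∈ E :=
    fun k v hv hne => hne (hv _ (Or.inr ⟨k, rfl⟩))
  have htXE : ∀ i, Lit.toForm ⟨PhiVar.X i, τ i⟩ ∈ E :=
    fun i => subset_logClosure T0 (Or.inl ⟨i, rfl⟩)
  have hjX : ∀ i, Form.neg (Lit.toForm ⟨PhiVar.X i, τ i⟩) ∉ E :=
    fun i h => (h w hw) (hw _ (Or.inl ⟨i, rfl⟩))
  have hnnXE : ∀ i, τ i = true → Form.neg (Form.neg (Form.atom (PhiVar.X i))) ∈ E := by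
    intro i ht v hv hne
    have := hv _ (Or.inl ⟨i, rfl⟩)
    rw [ht] at this
    simp only [Lit.toForm, if_true] at this
    exact hne this
  -- stage computations
  have claim1 : ∀ i, extStage (NMUDefault.toDefault '' DPhi Φ) ∅ E i ⊆ E := by
    intro i; induction i with
    | zero => exact fun φ h => h.elim
    | succ i ih =>
      rintro φ hφ
      rcases hφ with h | ⟨d', ⟨d, hd, rfl⟩, hc, hpre, hj⟩
      · exact logClosure_idem (logClosure_mono ih h)
      · have hj' : Form.neg d.concl.toForm ∉ E := by
          refine hj d.concl.toForm ?_
          simp [NMUDefault.toDefault]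
        rcases hd with ⟨i0, rfl⟩ | ⟨i0, rfl⟩ | ⟨k, j, rfl⟩ | ⟨k, rfl⟩ | ⟨k, rfl⟩ <;>
            simp only [NMUDefault.toDefault, Lit.toForm, if_true, if_false, Bool.false_eq_true,
              ite_false, ite_true] at hc hj' <;> subst hc
        · cases ht : τ i0 with
          | true =>
            have := htXE i0; rw [ht] at this
            simpa [Lit.toForm] using this
          | false =>
            exfalso; apply hj'
            have := htXE i0; rw [ht] at this
            simpa [Lit.toForm] using this
        · cases ht : τ i0 with
          | true => exact absurd (hnnXE i0 ht) hj'
          | false =>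
            have := htXE i0; rw [ht] at this
            simpa [Lit.toForm] using this
        · exact subset_logClosure T0 (Or.inr ⟨k, rfl⟩)
        · exact absurd (hnnCE k) hj'
        · exfalso
          apply hnCE k
          apply ih
          have := hpre (Lit.toForm ⟨PhiVar.C k, false⟩) (by simp [NMUDefault.toDefault])
          simpa [Lit.toForm] using this
  have hstage1 : ∀ i0, Lit.toForm ⟨PhiVar.X i0, τ i0⟩ ∈
      extStage (NMUDefault.toDefault '' DPhi Φ) ∅ E 1 := by
    intro i0
    cases ht : τ i0 with
    | true =>
      refine Or.inr ⟨(⟨none, ⟨PhiVar.X i0, true⟩⟩ : NMUDefault (PhiVar n m)).toDefault,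
        Set.mem_image_of_mem _ (Or.inl ⟨i0, rfl⟩), by simp [NMUDefault.toDefault, ht],
        by rintro a ha; simp [NMUDefault.toDefault] at ha, ?_⟩
      rintro b hb
      simp only [NMUDefault.toDefault, List.mem_singleton] at hb
      subst hb
      have := hjX i0; rw [ht] at this; exact this
    | false =>
      refine Or.inr ⟨(⟨none, ⟨PhiVar.X i0, false⟩⟩ : NMUDefault (PhiVar n m)).toDefault,
        Set.mem_image_of_mem _ (Or.inr (Or.inl ⟨i0, rfl⟩)), by simp [NMUDefault.toDefault, ht],
        by rintro a ha; simp [NMUDefault.toDefault] at ha, ?_⟩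
      rintro b hb
      simp only [NMUDefault.toDefault, List.mem_singleton] at hb
      subst hb
      have := hjX i0; rw [ht] at this; exact this
  have claim2 : T0 ⊆ extStage (NMUDefault.toDefault '' DPhi Φ) ∅ E 2 := by
    rintro φ (⟨i0, rfl⟩ | ⟨k, rfl⟩)
    · exact extStage_succ_subset _ _ _ 1 (hstage1 i0)
    · obtain ⟨jj, hjj⟩ := hτ k
      refine Or.inr ⟨(⟨some ⟨PhiVar.X (Φ k jj).letter, (Φ k jj).pos⟩,
        ⟨PhiVar.C k, true⟩⟩ : NMUDefault (PhiVar n m)).toDefault,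
        Set.mem_image_of_mem _ (Or.inr (Or.inr (Or.inl ⟨k, jj, rfl⟩))),
        by simp [NMUDefault.toDefault, Lit.toForm], ?_, ?_⟩
      · rintro a ha
        simp only [NMUDefault.toDefault, Option.map_some, Option.mem_def,
          Option.some_inj] at ha
        subst ha
        have := hstage1 (Φ k jj).letter
        rw [hjj] at this
        exact this
      · rintro b hb
        simp only [NMUDefault.toDefault, List.mem_singleton] at hb
        subst hb
        simpa [Lit.toForm] using hnCE k
  refine ⟨E, ?_, hLne⟩
  simp only [NMU.IsExtension, IsExtension, Set.image_empty]
  refine Set.Subset.antisymm ?_ (Set.iUnion_subset claim1)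
  intro φ hφ
  refine Set.mem_iUnion.mpr ⟨3, Or.inl ?_⟩
  exact logClosure_mono claim2 hφ

end NMUProof
/-- The NMU theory `Δ(Φ) = (D(Φ), ∅)` has tightness 1 (its atomic dependency graph has no
SCC with more than one atom), and `Φ` is unsatisfiable iff `Δ(Φ) ⊨ l`. -/
theorem nmu_entailment_hardness {n m : ℕ} (Φ : Fin m → Fin 3 → Lit (Fin n)) :
    (∀ a b : PhiVar n m, depReach (DPhi Φ) a b → depReach (DPhi Φ) b a → a = b) ∧
    (¬ Sat3 Φ ↔ NMU.entails (DPhi Φ) ∅ ⟨PhiVar.L, true⟩) := by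
  refine ⟨NMUProof.tightness_one Φ, ?_, ?_⟩
  · intro hns E hE
    by_contra hl
    exact hns (NMUProof.lemA Φ hE (by simpa [Lit.toForm] using hl))
  · intro hent hsat
    obtain ⟨E, hE, hl⟩ := NMUProof.lemB Φ hsat
    exact hl (by simpa [Lit.toForm] using hent E hE)
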